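/- arXiv:math/0602411 — 2 statements merged into one kernel-verified Lean document; each statement's English description precedes it below -/
import Mathlib

section
/- Every HR-module is isomorphic, as an HR-datum, to a finite direct sum of elementary HR-modules A_m. -/
open scoped TensorProduct

/-- The raw data of an HR-datum: a ℤ-grading by submodules, a ℂ-valued bilinear
intersection form, and a Lefschetz operator. -/
structure HRData (W : Type*) [AddCommGroup W] [Module ℝ W] where
  grading : ℤ → Submodule ℝ W
  form : W →ₗ[ℝ] W →ₗ[ℝ] ℂ
  lef : W →ₗ[ℝ] W

variable {W : Type*} [AddCommGroup W] [Module ℝ W]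

/-- The axioms of an HR-datum: `W` is a finite-dimensional real vector space, internally
graded in a bounded range of degrees; the intersection form is symmetric, nondegenerate,
of total degree `0` and satisfies `⟨W^{−k}, W^k⟩ ⊆ i^k·ℝ`; the Lefschetz operator has
degree `2` (in particular it kills the top degree) and is self-adjoint for the form. -/
def HRData.IsHRDatum (h : HRData W) : Prop :=
  FiniteDimensional ℝ W ∧
  DirectSum.IsInternal h.grading ∧
  (∃ m : ℕ, ∀ k : ℤ, (m : ℤ) < |k| → h.grading k = ⊥) ∧
  (∀ x y, h.form x y = h.form y x) ∧
  (∀ x, (∀ y, h.form x y = 0) → x = 0) ∧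
  (∀ j k : ℤ, j + k ≠ 0 → ∀ x ∈ h.grading j, ∀ y ∈ h.grading k, h.form x y = 0) ∧
  (∀ k : ℤ, ∀ x ∈ h.grading (-k), ∀ y ∈ h.grading k,
      ∃ r : ℝ, h.form x y = Complex.I ^ k * (r : ℂ)) ∧
  (∀ k : ℤ, ∀ x ∈ h.grading k, h.lef x ∈ h.grading (k + 2)) ∧
  (∀ x y, h.form (h.lef x) y = h.form x (h.lef y))

/-- An HR-module: an HR-datum such that for every `k ≥ 0` the form `i^k·s_k`, where
`s_k(x,y) = ⟨x, L^k y⟩`, is (real-valued and) positive definite on the primitive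
subspace `P(W^{−k}) = ker (L^{k+1} : W^{−k} → W^{k+2})`. -/
def HRData.IsHRModule (h : HRData W) : Prop :=
  h.IsHRDatum ∧
  ∀ k : ℕ, ∀ x ∈ h.grading (-(k : ℤ)), (h.lef ^ (k + 1)) x = 0 → x ≠ 0 →
    ∃ r : ℝ, 0 < r ∧ Complex.I ^ (k : ℕ) * h.form x ((h.lef ^ k) x) = (r : ℂ)

/-- `U` is an "elementary" HR-submodule of type `A_m`: it is spanned by linearly
independent homogeneous vectors `e_j` of degrees `−m, −m+2, …, m` on which the Lefschetz
operator acts by `L e_j = e_{j+1}` (and `L e_m = 0`) and whose intersection numbers are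
`⟨e_j, e_{j'}⟩ = (−i)^m` for `j + j' = m` and `0` otherwise. -/
def HRData.IsElementarySub (h : HRData W) (m : ℕ) (U : Submodule ℝ W) : Prop :=
  ∃ e : Fin (m + 1) → W,
    LinearIndependent ℝ e ∧
    U = Submodule.span ℝ (Set.range e) ∧
    (∀ j : Fin (m + 1), e j ∈ h.grading (2 * (j : ℤ) - m)) ∧
    (∀ j : Fin (m + 1), h.lef (e j) =
      if hj : (j : ℕ) + 1 < m + 1 then e ⟨(j : ℕ) + 1, hj⟩ else 0) ∧
    (∀ j j' : Fin (m + 1), h.form (e j) (e j') =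
      if (j : ℕ) + (j' : ℕ) = m then (-Complex.I) ^ m else 0)

/-- The HR-datum `h` is (isomorphic to) the elementary HR-module `A_m`. -/
def HRData.IsElementary (h : HRData W) (m : ℕ) : Prop :=
  h.IsHRDatum ∧ h.IsElementarySub m ⊤

/-! Induct on the dimension of a nondegenerate, `L`-stable graded subspace `V`. If `-k` is its
lowest degree, every nonzero `x ∈ V^{-k}` is primitive (`L^{k+1} x` lies in degree `k + 2`,
where `V` vanishes), so by the Hodge–Riemann condition it can be rescaled to
`⟨x, L^k x⟩ = (-i)^k`. The string `x, L x, …, L^k x` then has an antidiagonal Gram matrix, so it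
spans a copy of `A_k` on which the form is nondegenerate. The reality condition
`⟨W^{-d}, W^d⟩ ⊆ i^d ℝ` makes the orthogonal projection onto this copy real and
degree-preserving, so the orthogonal complement of `A_k` in `V` is again a nondegenerate,
`L`-stable graded subspace, of smaller dimension. -/

namespace LinearMap

variable {R M M' : Type*} [CommSemiring R] [AddCommMonoid M] [Module R M] [AddCommMonoid M']
  [Module R M']

theorem IsAdjointPair.pow {B : M →ₗ[R] M →ₗ[R] M'} {f : Module.End R M}
    (hf : IsAdjointPair B B f f) (n : ℕ) : IsAdjointPair B B ⇑(f ^ n) ⇑(f ^ n) := by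
  induction n with
  | zero => exact isAdjointPair_one
  | succ n ih =>
    have := ih.mul hf
    rwa [← pow_succ, ← pow_succ'] at this

theorem IsAdjointPair.apply_mem_orthogonalBilin {B : M →ₗ[R] M →ₗ[R] M'} {f : Module.End R M}
    (hf : IsAdjointPair B B f f) {N : Submodule R M} (hN : ∀ x ∈ N, f x ∈ N) {y : M}
    (hy : y ∈ N.orthogonalBilin B) : f y ∈ N.orthogonalBilin B :=
  fun x hx => hf x y ▸ hy _ (hN x hx)

end LinearMap

namespace Submodule

variable {R M M' : Type*} [CommRing R] [AddCommGroup M] [Module R M] [AddCommGroup M'] [Module R M']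

theorem mem_orthogonalBilin_span_iff {B : M →ₗ[R] M →ₗ[R] M'} {s : Set M} {y : M} :
    y ∈ (span R s).orthogonalBilin B ↔ ∀ x ∈ s, B x y = 0 :=
  ⟨fun hy x hx => hy x (subset_span hx),
    fun hy _ hx => span_le (p := LinearMap.ker (B.flip y)) |>.2 hy hx⟩

theorem iSupIndep_of_pairwise_le_orthogonalBilin {ι : Type*} {B : M →ₗ[R] M →ₗ[R] M'}
    {U : ι → Submodule R M} (horth : Pairwise fun i j => U j ≤ (U i).orthogonalBilin B)
    (hU : ∀ i, U i ⊓ (U i).orthogonalBilin B = ⊥) : iSupIndep U := by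
  intro i
  rw [disjoint_iff, eq_bot_iff, ← hU i]
  exact inf_le_inf_left _ (iSup₂_le fun j hj => horth (Ne.symm hj))

theorem iSup_eq_sup_iSup_inf_of_exists_sub_mem {ι : Type*} {V : ι → Submodule R M}
    {U P : Submodule R M} (hUV : U ≤ ⨆ i, V i)
    (hproj : ∀ i, ∀ y ∈ V i, ∃ u ∈ V i, u ∈ U ∧ y - u ∈ P) :
    ⨆ i, V i = U ⊔ ⨆ i, (V i ⊓ P) := by
  refine le_antisymm (iSup_le fun i y hy => ?_) (sup_le hUV (iSup_mono fun _ => inf_le_left))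
  obtain ⟨u, hu, huU, hyu⟩ := hproj i y hy
  rw [← add_sub_cancel u y]
  exact add_mem (mem_sup_left huU) (mem_sup_right (mem_iSup_of_mem i ⟨sub_mem hy hu, hyu⟩))

end Submodule

section AntidiagonalGram

variable {K M M' : Type*} [Field K] [AddCommGroup M] [Module K M] [AddCommGroup M'] [Module K M']
  {B : M →ₗ[K] M →ₗ[K] M'} {n : ℕ} {e : Fin (n + 1) → M} {ζ : M'}

theorem form_rev_sum_smul_of_antidiagonal
    (hB : ∀ a b, B (e a) (e b) = if (a : ℕ) + b = n then ζ else 0) (c : Fin (n + 1) → K)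
    (j : Fin (n + 1)) : B (e j.rev) (∑ i, c i • e i) = c j • ζ := by
  simp only [map_sum, map_smul, hB, Fin.val_rev]
  rw [Finset.sum_eq_single j]
  · rw [if_pos (by omega)]
  · intro i _ hij
    rw [if_neg (by omega), smul_zero]
  · simp

theorem eq_zero_of_forall_form_sum_eq_zero_of_antidiagonal
    (hB : ∀ a b, B (e a) (e b) = if (a : ℕ) + b = n then ζ else 0) (hζ : ζ ≠ 0)
    {c : Fin (n + 1) → K} (hc : ∀ j, B (e j) (∑ i, c i • e i) = 0) (j : Fin (n + 1)) : c j = 0 := by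
  have := hc j.rev
  rw [form_rev_sum_smul_of_antidiagonal hB] at this
  exact (smul_eq_zero.1 this).resolve_right hζ

theorem linearIndependent_of_antidiagonal
    (hB : ∀ a b, B (e a) (e b) = if (a : ℕ) + b = n then ζ else 0) (hζ : ζ ≠ 0) :
    LinearIndependent K e :=
  Fintype.linearIndependent_iff.2 fun c hc =>
    eq_zero_of_forall_form_sum_eq_zero_of_antidiagonal hB hζ fun j => by rw [hc, map_zero]

theorem span_inf_orthogonalBilin_eq_bot_of_antidiagonal
    (hB : ∀ a b, B (e a) (e b) = if (a : ℕ) + b = n then ζ else 0) (hζ : ζ ≠ 0) :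
    Submodule.span K (Set.range e) ⊓ (Submodule.span K (Set.range e)).orthogonalBilin B = ⊥ := by
  refine eq_bot_iff.2 fun u ⟨hu, hperp⟩ => ?_
  obtain ⟨c, rfl⟩ := (Submodule.mem_span_range_iff_exists_fun K).1 hu
  have hc := eq_zero_of_forall_form_sum_eq_zero_of_antidiagonal hB hζ fun j =>
    hperp _ (Submodule.subset_span (Set.mem_range_self j))
  simp [hc]

theorem sub_sum_mem_orthogonalBilin_of_antidiagonal
    (hB : ∀ a b, B (e a) (e b) = if (a : ℕ) + b = n then ζ else 0) {y : M} {c : Fin (n + 1) → K}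
    (hy : ∀ j, B (e j.rev) y = c j • ζ) :
    y - ∑ j, c j • e j ∈ (Submodule.span K (Set.range e)).orthogonalBilin B := by
  refine Submodule.mem_orthogonalBilin_span_iff.2 ?_
  rintro _ ⟨j, rfl⟩
  rw [← Fin.rev_rev j, map_sub, hy, form_rev_sum_smul_of_antidiagonal hB, sub_self]

end AntidiagonalGram

theorem Complex.I_zpow_sub_two_mul (k j : ℕ) :
    Complex.I ^ ((k : ℤ) - 2 * j) = (((-1) ^ (k + j) : ℝ) : ℂ) * (-Complex.I) ^ k := by
  rw [show (k : ℤ) - 2 * j = ((k : ℕ) : ℤ) - ((2 * j : ℕ) : ℤ) by push_cast; ring,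
    zpow_sub₀ I_ne_zero, zpow_natCast, zpow_natCast, pow_mul, I_sq, neg_pow Complex.I]
  push_cast
  field_simp
  ring_nf
  simp [pow_mul']

theorem exists_smul_form_apply_smul_eq_neg_I_pow (B : W →ₗ[ℝ] W →ₗ[ℝ] ℂ) (f : W →ₗ[ℝ] W)
    {x : W} {r : ℝ} {k : ℕ} (hr : 0 < r) (hx : Complex.I ^ k * B x (f x) = r) :
    ∃ t : ℝ, B (t • x) (f (t • x)) = (-Complex.I) ^ k := by
  have hI : (-Complex.I) ^ k * Complex.I ^ k = 1 := by rw [← mul_pow]; simp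
  have hBx : B x (f x) = r * (-Complex.I) ^ k := by
    linear_combination (-Complex.I) ^ k * hx - B x (f x) * hI
  refine ⟨(√r)⁻¹, ?_⟩
  simp only [map_smul, LinearMap.smul_apply, smul_smul]
  rw [Complex.real_smul, ← mul_inv, Real.mul_self_sqrt hr.le, hBx]
  have hr' : (r : ℂ) ≠ 0 := by exact_mod_cast hr.ne'
  push_cast
  field_simp

namespace HRData

variable {h : HRData W}

theorem lef_pow_mem {V : ℤ → Submodule ℝ W} (hV : ∀ {d : ℤ} {x : W}, x ∈ V d → h.lef x ∈ V (d + 2))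
    {d : ℤ} {x : W} (hx : x ∈ V d) (j : ℕ) : (h.lef ^ j) x ∈ V (d + 2 * j) := by
  induction j with
  | zero => simpa using hx
  | succ j ih =>
    rw [pow_succ', Module.End.mul_apply]
    convert hV ih using 2
    push_cast
    ring

def lefString (h : HRData W) (x : W) (k : ℕ) : Fin (k + 1) → W := fun j => (h.lef ^ (j : ℕ)) x

namespace IsHRDatum

theorem finiteDimensional (hW : h.IsHRDatum) : FiniteDimensional ℝ W := hW.1

theorem isInternal (hW : h.IsHRDatum) : DirectSum.IsInternal h.grading := hW.2.1

theorem exists_grading_eq_bot (hW : h.IsHRDatum) :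
    ∃ m : ℕ, ∀ k : ℤ, (m : ℤ) < |k| → h.grading k = ⊥ :=
  hW.2.2.1

theorem form_comm (hW : h.IsHRDatum) (x y : W) : h.form x y = h.form y x := hW.2.2.2.1 x y

theorem eq_zero_of_forall_form_eq_zero (hW : h.IsHRDatum) {x : W} (hx : ∀ y, h.form x y = 0) :
    x = 0 :=
  hW.2.2.2.2.1 x hx

theorem form_eq_zero_of_add_ne_zero (hW : h.IsHRDatum) {j k : ℤ} (hjk : j + k ≠ 0) {x y : W}
    (hx : x ∈ h.grading j) (hy : y ∈ h.grading k) : h.form x y = 0 :=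
  hW.2.2.2.2.2.1 j k hjk x hx y hy

theorem exists_form_eq_I_zpow_mul (hW : h.IsHRDatum) {k : ℤ} {x y : W}
    (hx : x ∈ h.grading (-k)) (hy : y ∈ h.grading k) :
    ∃ r : ℝ, h.form x y = Complex.I ^ k * (r : ℂ) :=
  hW.2.2.2.2.2.2.1 k x hx y hy

theorem lef_mem (hW : h.IsHRDatum) {k : ℤ} {x : W} (hx : x ∈ h.grading k) :
    h.lef x ∈ h.grading (k + 2) :=
  hW.2.2.2.2.2.2.2.1 k x hx

theorem isAdjointPair_lef (hW : h.IsHRDatum) :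
    LinearMap.IsAdjointPair h.form h.form h.lef h.lef :=
  hW.2.2.2.2.2.2.2.2

theorem form_lef_pow_lef_pow (hW : h.IsHRDatum) {k : ℕ} {x : W} (hx : x ∈ h.grading (-k))
    (hprim : (h.lef ^ (k + 1)) x = 0) (a b : ℕ) :
    h.form ((h.lef ^ a) x) ((h.lef ^ b) x) =
      if a + b = k then h.form x ((h.lef ^ k) x) else 0 := by
  rw [hW.isAdjointPair_lef.pow a, ← Module.End.mul_apply, ← pow_add]
  rcases lt_trichotomy (a + b) k with hlt | rfl | hgt
  · rw [if_neg hlt.ne]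
    exact hW.form_eq_zero_of_add_ne_zero (by omega) hx (lef_pow_mem hW.lef_mem hx _)
  · rw [if_pos rfl]
  · rw [if_neg hgt.ne', ← Nat.sub_add_cancel hgt, pow_add, Module.End.mul_apply, hprim,
      map_zero, map_zero]

theorem exists_form_eq_real_mul_neg_I_pow (hW : h.IsHRDatum) {k j : ℕ} {d : ℤ} {x y : W}
    (hx : x ∈ h.grading (-k + 2 * j)) (hy : y ∈ h.grading d) :
    ∃ c : ℝ, h.form x y = c * (-Complex.I) ^ k := by
  by_cases hd : -k + 2 * j + d = 0
  · obtain ⟨r, hr⟩ :=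
      hW.exists_form_eq_I_zpow_mul (k := d) (by rwa [neg_eq_of_add_eq_zero_left hd]) hy
    refine ⟨r * (-1) ^ (k + j), ?_⟩
    rw [hr, show d = k - 2 * j by omega, Complex.I_zpow_sub_two_mul]
    push_cast
    ring
  · exact ⟨0, by rw [hW.form_eq_zero_of_add_ne_zero hd hx hy]; simp⟩

theorem form_lefString (hW : h.IsHRDatum) {k : ℕ} {x : W}
    (hx : x ∈ h.grading (-k)) (hprim : (h.lef ^ (k + 1)) x = 0)
    (hnorm : h.form x ((h.lef ^ k) x) = (-Complex.I) ^ k) (a b : Fin (k + 1)) :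
    h.form (h.lefString x k a) (h.lefString x k b) =
      if (a : ℕ) + b = k then (-Complex.I) ^ k else 0 := by
  unfold lefString
  rw [hW.form_lef_pow_lef_pow hx hprim, hnorm]

theorem isElementarySub_span_lefString (hW : h.IsHRDatum) {k : ℕ} {x : W}
    (hx : x ∈ h.grading (-k)) (hprim : (h.lef ^ (k + 1)) x = 0)
    (hnorm : h.form x ((h.lef ^ k) x) = (-Complex.I) ^ k) :
    h.IsElementarySub k (Submodule.span ℝ (Set.range (h.lefString x k))) := by
  have hgram := hW.form_lefString hx hprim hnorm
  refine ⟨_, linearIndependent_of_antidiagonal hgram (by simp), rfl, fun j => ?_, fun j => ?_,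
    hgram⟩
  · show (h.lef ^ (j : ℕ)) x ∈ _
    convert lef_pow_mem hW.lef_mem hx (j : ℕ) using 2
    ring
  · simp only [lefString, ← Module.End.mul_apply, ← pow_succ']
    split_ifs with hj
    · rfl
    · rw [show (j : ℕ) + 1 = k + 1 by omega, hprim]

end IsHRDatum

namespace IsElementarySub

variable {m : ℕ} {U : Submodule ℝ W}

theorem inf_orthogonalBilin_eq_bot (hU : h.IsElementarySub m U) :
    U ⊓ U.orthogonalBilin h.form = ⊥ := by
  obtain ⟨e, -, rfl, -, -, hgram⟩ := hU
  exact span_inf_orthogonalBilin_eq_bot_of_antidiagonal hgram (by simp)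

theorem ne_bot (hU : h.IsElementarySub m U) : U ≠ ⊥ := by
  obtain ⟨e, hli, rfl, -⟩ := hU
  simpa using ⟨0, hli.ne_zero 0⟩

theorem lef_mem (hU : h.IsElementarySub m U) {x : W} (hx : x ∈ U) : h.lef x ∈ U := by
  obtain ⟨e, -, rfl, -, hlef, -⟩ := hU
  refine Submodule.span_le (p := (Submodule.span ℝ (Set.range e)).comap h.lef) |>.2 ?_ hx
  rintro _ ⟨j, rfl⟩
  rw [SetLike.mem_coe, Submodule.mem_comap, hlef]
  split_ifs
  · exact Submodule.subset_span (Set.mem_range_self _)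
  · exact zero_mem _

end IsElementarySub

/-- `V d` plays the role of `V ∩ W^d` for an `L`-stable graded subspace `V` on which the
intersection form is nondegenerate. -/
structure IsSubdatum (h : HRData W) (V : ℤ → Submodule ℝ W) : Prop where
  le_grading (d : ℤ) : V d ≤ h.grading d
  lef_mem {d : ℤ} {x : W} : x ∈ V d → h.lef x ∈ V (d + 2)
  eq_zero_of_forall_form_eq_zero {d : ℤ} {x : W} :
    x ∈ V d → (∀ y ∈ V (-d), h.form x y = 0) → x = 0

theorem IsHRDatum.isSubdatum_grading (hW : h.IsHRDatum) : h.IsSubdatum h.grading where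
  le_grading _ := le_rfl
  lef_mem := hW.lef_mem
  eq_zero_of_forall_form_eq_zero {d x} hx h0 := by
    have hker : ⨆ e, h.grading e ≤ LinearMap.ker (h.form x) := iSup_le fun e z hz => by
      by_cases he : e = -d
      · subst he
        exact h0 z hz
      · exact hW.form_eq_zero_of_add_ne_zero (by omega) hx hz
    rw [hW.isInternal.submodule_iSup_eq_top] at hker
    exact hW.eq_zero_of_forall_form_eq_zero fun y => hker Submodule.mem_top

namespace IsSubdatum

variable {V : ℤ → Submodule ℝ W}

theorem neg_ne_bot (hV : h.IsSubdatum V) {d : ℤ} (hd : V d ≠ ⊥) : V (-d) ≠ ⊥ := by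
  obtain ⟨z, hz, hz0⟩ := Submodule.exists_mem_ne_zero_of_ne_bot hd
  refine fun hbot => hz0 (hV.eq_zero_of_forall_form_eq_zero hz fun y hy => ?_)
  rw [hbot, Submodule.mem_bot] at hy
  rw [hy, map_zero]

theorem exists_top_degree (hW : h.IsHRDatum) (hV : h.IsSubdatum V) (hne : ⨆ d, V d ≠ ⊥) :
    ∃ k : ℕ, V (-k) ≠ ⊥ ∧ ∀ d : ℤ, k < d → V d = ⊥ := by
  obtain ⟨m, hm⟩ := hW.exists_grading_eq_bot
  have hex : ∃ d, V d ≠ ⊥ := by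
    by_contra! hc
    exact hne (by simp [hc])
  have hbdd : ∃ b : ℤ, ∀ d, V d ≠ ⊥ → d ≤ b := ⟨m, fun d hd => by
    by_contra! hlt
    exact hd (eq_bot_iff.2 ((hV.le_grading d).trans (hm d (hlt.trans_le (le_abs_self d))).le))⟩
  obtain ⟨k, hk, hmax⟩ := Int.exists_greatest_of_bdd hbdd hex
  have hk0 : 0 ≤ k := by
    have := hmax _ (hV.neg_ne_bot hk)
    omega
  lift k to ℕ using hk0
  refine ⟨k, hV.neg_ne_bot hk, fun d hd => ?_⟩
  by_contra hc
  have := hmax d hc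
  omega

theorem inf_orthogonalBilin (hW : h.IsHRDatum) (hV : h.IsSubdatum V) {U : Submodule ℝ W}
    (hU : ∀ x ∈ U, h.lef x ∈ U)
    (hproj : ∀ d, ∀ y ∈ V d, ∃ u ∈ V d, u ∈ U ∧ y - u ∈ U.orthogonalBilin h.form) :
    h.IsSubdatum fun d => V d ⊓ U.orthogonalBilin h.form where
  le_grading d := inf_le_left.trans (hV.le_grading d)
  lef_mem := fun ⟨hx, hxU⟩ =>
    ⟨hV.lef_mem hx, hW.isAdjointPair_lef.apply_mem_orthogonalBilin hU hxU⟩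
  eq_zero_of_forall_form_eq_zero {d x} := fun ⟨hx, hxU⟩ h0 =>
    hV.eq_zero_of_forall_form_eq_zero hx fun y hy => by
      obtain ⟨u, hu, huU, hyu⟩ := hproj _ y hy
      rw [← add_sub_cancel u y, map_add, h0 _ ⟨sub_mem hy hu, hyu⟩, hW.form_comm x u,
        hxU u huU, add_zero]

theorem exists_mem_span_lefString_sub_mem_orthogonalBilin (hW : h.IsHRDatum)
    (hV : h.IsSubdatum V) {k : ℕ} {x : W} (hx : x ∈ V (-k)) (hprim : (h.lef ^ (k + 1)) x = 0)
    (hnorm : h.form x ((h.lef ^ k) x) = (-Complex.I) ^ k) {d : ℤ} {y : W} (hy : y ∈ V d) :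
    ∃ u ∈ V d, u ∈ Submodule.span ℝ (Set.range (h.lefString x k)) ∧
      y - u ∈ (Submodule.span ℝ (Set.range (h.lefString x k))).orthogonalBilin h.form := by
  have he : ∀ j : Fin (k + 1), h.lefString x k j ∈ V (-k + 2 * (j : ℕ)) :=
    fun j => lef_pow_mem hV.lef_mem hx j
  have hyW := hV.le_grading d hy
  choose c hc using fun j : Fin (k + 1) =>
    hW.exists_form_eq_real_mul_neg_I_pow (hV.le_grading _ (he j.rev)) hyW
  refine ⟨∑ j, c j • h.lefString x k j, Submodule.sum_mem _ fun j _ => ?_,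
    Submodule.sum_mem _ fun j _ => Submodule.smul_mem _ _ (Submodule.subset_span ⟨j, rfl⟩),
    sub_sum_mem_orthogonalBilin_of_antidiagonal (hW.form_lefString (hV.le_grading _ hx) hprim hnorm)
      fun j => by rw [hc, Complex.real_smul]⟩
  by_cases hj : -k + 2 * (j : ℕ) = d
  · exact Submodule.smul_mem _ _ (hj ▸ he j)
  · have hzero : h.form (h.lefString x k j.rev) y = 0 :=
      hW.form_eq_zero_of_add_ne_zero (by rw [Fin.val_rev]; omega) (hV.le_grading _ (he j.rev)) hyW
    rw [hc, mul_eq_zero, Complex.ofReal_eq_zero] at hzero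
    rw [hzero.resolve_right (by simp), zero_smul]
    exact zero_mem _

theorem exists_isElementarySub_split (hm : h.IsHRModule) (hV : h.IsSubdatum V)
    (hne : ⨆ d, V d ≠ ⊥) :
    ∃ (k : ℕ) (U : Submodule ℝ W), h.IsElementarySub k U ∧ U ≤ ⨆ d, V d ∧
      h.IsSubdatum (fun d => V d ⊓ U.orthogonalBilin h.form) ∧
      ⨆ d, V d = U ⊔ ⨆ d, (V d ⊓ U.orthogonalBilin h.form) := by
  obtain ⟨k, hk, htop⟩ := hV.exists_top_degree hm.1 hne
  obtain ⟨x₀, hx₀, hx₀0⟩ := Submodule.exists_mem_ne_zero_of_ne_bot hk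
  have hprim₀ : (h.lef ^ (k + 1)) x₀ = 0 := by
    have := lef_pow_mem hV.lef_mem hx₀ (k + 1)
    rwa [htop _ (by push_cast; omega), Submodule.mem_bot] at this
  obtain ⟨r, hr, hxr⟩ := hm.2 k x₀ (hV.le_grading _ hx₀) hprim₀ hx₀0
  obtain ⟨t, hnorm⟩ := exists_smul_form_apply_smul_eq_neg_I_pow h.form (h.lef ^ k) hr hxr
  have hx : t • x₀ ∈ V (-k) := Submodule.smul_mem _ _ hx₀
  have hprim : (h.lef ^ (k + 1)) (t • x₀) = 0 := by rw [map_smul, hprim₀, smul_zero]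
  have hU := hm.1.isElementarySub_span_lefString (hV.le_grading _ hx) hprim hnorm
  have hproj := fun d y (hy : y ∈ V d) =>
    hV.exists_mem_span_lefString_sub_mem_orthogonalBilin hm.1 hx hprim hnorm hy
  have hUV : Submodule.span ℝ (Set.range (h.lefString (t • x₀) k)) ≤ ⨆ d, V d :=
    Submodule.span_le.2 <| Set.range_subset_iff.2 fun j =>
      Submodule.mem_iSup_of_mem _ (lef_pow_mem hV.lef_mem hx j)
  exact ⟨k, _, hU, hUV, hV.inf_orthogonalBilin hm.1 (fun _ => hU.lef_mem) hproj,
    Submodule.iSup_eq_sup_iSup_inf_of_exists_sub_mem hUV hproj⟩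

theorem exists_elementary_decomposition (hm : h.IsHRModule) (hV : h.IsSubdatum V) :
    ∃ 𝒮 : Set (Submodule ℝ W), 𝒮.Finite ∧ sSup 𝒮 = ⨆ d, V d ∧
      (∀ U ∈ 𝒮, ∃ m, h.IsElementarySub m U) ∧
      𝒮.Pairwise fun U U' => U' ≤ U.orthogonalBilin h.form := by
  have := hm.1.finiteDimensional
  induction hn : Module.finrank ℝ ↥(⨆ d, V d) using Nat.strong_induction_on generalizing V with
  | _ n ih =>
    by_cases hne : ⨆ d, V d = ⊥
    · exact ⟨∅, Set.finite_empty, by rw [sSup_empty, hne], by simp, Set.pairwise_empty _⟩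
    obtain ⟨k, U, hU, hUV, hV', hsup⟩ := hV.exists_isElementarySub_split hm hne
    have hV'U : ⨆ d, (V d ⊓ U.orthogonalBilin h.form) ≤ U.orthogonalBilin h.form :=
      iSup_le fun _ => inf_le_right
    have hlt : ⨆ d, (V d ⊓ U.orthogonalBilin h.form) < ⨆ d, V d := by
      refine lt_of_le_of_ne (iSup_mono fun _ => inf_le_left) fun heq => hU.ne_bot ?_
      rw [← hU.inf_orthogonalBilin_eq_bot, inf_eq_left.2 (hUV.trans (heq ▸ hV'U))]
    obtain ⟨𝒮, hfin, hsup𝒮, helem, horth⟩ :=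
      ih _ (hn ▸ Submodule.finrank_lt_finrank_of_lt hlt) hV' rfl
    have h𝒮U : ∀ U' ∈ 𝒮, U' ≤ U.orthogonalBilin h.form :=
      fun U' hU' => (le_sSup hU').trans (hsup𝒮 ▸ hV'U)
    refine ⟨insert U 𝒮, hfin.insert U, by rw [sSup_insert, hsup𝒮, hsup],
      Set.forall_mem_insert.2 ⟨⟨k, hU⟩, helem⟩, horth.insert fun U' hU' _ => ⟨h𝒮U U' hU', ?_⟩⟩
    exact fun u hu z hz => hm.1.form_comm z u ▸ h𝒮U U' hU' hz u hu

end IsSubdatum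

end HRData

/-- Every HR-module is isomorphic, as an HR-datum, to a finite direct sum
of elementary HR-modules `A_m`: there is an internal decomposition of `W` into finitely
many pairwise orthogonal elementary HR-submodules. -/
theorem hrModule_decomposition (h : HRData W) (hm : h.IsHRModule) :
    ∃ (N : ℕ) (m : Fin N → ℕ) (U : Fin N → Submodule ℝ W),
      DirectSum.IsInternal U ∧
      (∀ i, h.IsElementarySub (m i) (U i)) ∧
      (∀ i j, i ≠ j → ∀ x ∈ U i, ∀ y ∈ U j, h.form x y = 0) := by
  obtain ⟨𝒮, hfin, hsup, helem, horth⟩ :=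
    hm.1.isSubdatum_grading.exists_elementary_decomposition hm
  obtain ⟨N, U, hrange⟩ := hfin.fin_embedding
  have hmem : ∀ i, U i ∈ 𝒮 := fun i => hrange ▸ Set.mem_range_self i
  choose m hU using fun i => helem _ (hmem i)
  have hUorth : Pairwise fun i j => U j ≤ (U i).orthogonalBilin h.form :=
    fun i j hij => horth (hmem i) (hmem j) (U.injective.ne hij)
  refine ⟨N, m, U, ?_, hU, fun i j hij x hx y hy => hUorth hij hy x hx⟩
  refine (DirectSum.isInternal_submodule_iff_iSupIndep_and_iSup_eq_top _).2
    ⟨Submodule.iSupIndep_of_pairwise_le_orthogonalBilin hUorth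
      fun i => (hU i).inf_orthogonalBilin_eq_bot, ?_⟩
  rw [← sSup_range, hrange, hsup, hm.1.isInternal.submodule_iSup_eq_top]
end

section
/- For every n ≥ 1 there is an isomorphism of HR-data A_n ⊗ A_1 ≅ A_{n+1} ⊕ A_{n−1}; in particular A_n ⊗ A_1 is an HR-module. -/
/-!
Clebsch–Gordan for `A_n ⊗ A_1`. With `e_j`, `f_s` the standard bases of `A_n` and `A_1`,
the vectors `L^j (e_0 ⊗ f_0)` and `L^j (e_1 ⊗ f_0 - n e_0 ⊗ f_1)`, rescaled by `1/√(n+1)`,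
form two mutually orthogonal Lefschetz strings of lengths `n + 1` and `n - 1`; together they
are `2 (n + 1) = dim (A_n ⊗ A_1)` vectors, hence a homogeneous basis.

An HR-datum with a homogeneous basis made of mutually orthogonal Lefschetz strings is an
HR-module: pairing against the dual string vectors shows that a primitive vector of degree `-k`
only has coordinates along the lowest vectors of strings of length `k`, and on those
`i^k ⟨x, L^k x⟩` is the sum of the squares of the coordinates.
-/

open scoped TensorProduct

variable {W : Type*} [AddCommGroup W] [Module ℝ W]

theorem iSupIndep.eq_of_le_of_iSup_eq_top {α ι : Type*} [CompleteLattice α] [IsModularLattice α]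
    {g s : ι → α} (hg : iSupIndep g) (hle : s ≤ g) (hs : ⨆ i, s i = ⊤) : s = g := by
  funext k
  have hrest : (⨆ (j) (_ : j ≠ k), s j) ⊓ g k = ⊥ :=
    eq_bot_iff.mpr <| (inf_le_inf_right _ (iSup₂_mono fun j _ => hle j)).trans
      (hg k).symm.eq_bot.le
  calc s k = s k ⊔ (⨆ (j) (_ : j ≠ k), s j) ⊓ g k := by rw [hrest, sup_bot_eq]
    _ = (s k ⊔ ⨆ (j) (_ : j ≠ k), s j) ⊓ g k := (sup_inf_assoc_of_le _ (hle k)).symm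
    _ = g k := by rw [← iSup_split_single, hs, top_inf_eq]

theorem Complex.neg_I_pow_eq_smul_I_zpow (j m : ℕ) :
    (-Complex.I) ^ m = ((-1) ^ j : ℝ) • Complex.I ^ (2 * (j : ℤ) - m) := by
  rw [zpow_sub₀ Complex.I_ne_zero, zpow_mul, zpow_natCast, zpow_natCast, ← Complex.inv_I,
    inv_pow, Complex.real_smul]
  push_cast
  rw [show (2 : ℤ) = ((2 : ℕ) : ℤ) from rfl, zpow_natCast, Complex.I_sq, div_eq_mul_inv,
    ← mul_assoc, ← mul_pow]
  norm_num

section LinearAlgebra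

variable {R M N P ι κ : Type*} [CommRing R] [AddCommGroup M] [Module R M] [AddCommGroup N]
  [Module R N] [AddCommGroup P] [Module R P]

theorem LinearMap.apply_mem_of_mem_span₂ (f : M →ₗ[R] N →ₗ[R] P) {s : Set M} {t : Set N}
    {p : Submodule R P} (h : ∀ x ∈ s, ∀ y ∈ t, f x y ∈ p) {x : M} {y : N}
    (hx : x ∈ Submodule.span R s) (hy : y ∈ Submodule.span R t) : f x y ∈ p :=
  Submodule.span_le.mpr (Set.image2_subset_iff.mpr h)
    (Submodule.map₂_span_span R f s t ▸ Submodule.apply_mem_map₂ f hx hy)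

theorem LinearMap.apply_sum_smul_of_pairing [Fintype κ] (f : M →ₗ[R] N →ₗ[R] P)
    {v : κ → M} {w : κ → N} (hvw : ∀ p q, p ≠ q → f (v p) (w q) = 0) (g : κ → R)
    (q : κ) :
    f (∑ p, g p • v p) (w q) = g q • f (v q) (w q) := by
  rw [map_sum, LinearMap.sum_apply, Finset.sum_eq_single q]
  · rw [map_smul, LinearMap.smul_apply]
  · intro p _ hpq
    rw [map_smul, LinearMap.smul_apply, hvw p q hpq, smul_zero]
  · simp

theorem Module.Basis.isInternal_span_image_fiber {γ : Type*} [DecidableEq γ]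
    (B : Module.Basis ι R M) (deg : ι → γ) :
    DirectSum.IsInternal fun k => Submodule.span R (B '' {i | deg i = k}) := by
  refine DirectSum.isInternal_submodule_of_iSupIndep_of_iSup_eq_top (fun k => ?_) ?_
  · refine (B.linearIndependent.disjoint_span_image (s := {i | deg i = k})
      (t := {i | deg i ≠ k}) (Set.disjoint_left.mpr fun i hi hi' => hi' hi)).mono_right ?_
    exact iSup₂_le fun j hj => Submodule.span_mono <| Set.image_mono fun i hi => by simp_all
  · refine eq_top_iff.mpr <| B.span_eq.ge.trans <| Submodule.span_le.mpr ?_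
    rintro _ ⟨i, rfl⟩
    exact Submodule.mem_iSup_of_mem (deg i) (Submodule.subset_span ⟨i, rfl, rfl⟩)

theorem DirectSum.IsInternal.eq_span_image_fiber {γ : Type*} [DecidableEq γ]
    {g : γ → Submodule R M} (hg : DirectSum.IsInternal g) (B : Module.Basis ι R M)
    (deg : ι → γ) (hB : ∀ i, B i ∈ g (deg i)) (k : γ) :
    g k = Submodule.span R (B '' {i | deg i = k}) := by
  refine congrFun (iSupIndep.eq_of_le_of_iSup_eq_top hg.submodule_iSupIndep (fun k => ?_)
    (B.isInternal_span_image_fiber deg).submodule_iSup_eq_top).symm k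
  exact Submodule.span_le.mpr <| by rintro _ ⟨i, rfl, rfl⟩; exact hB i

theorem Module.Basis.iSup_range_map_eq_span_image_fiber (B : Module.Basis ι R M)
    (C : Module.Basis κ R N) (deg : ι → ℤ) (deg' : κ → ℤ) {g : ℤ → Submodule R M}
    {g' : ℤ → Submodule R N} (hg : ∀ i, g i = Submodule.span R (B '' {p | deg p = i}))
    (hg' : ∀ i, g' i = Submodule.span R (C '' {q | deg' q = i})) (k : ℤ) :
    ⨆ i, LinearMap.range (TensorProduct.map (g i).subtype (g' (k - i)).subtype) =
      Submodule.span R (B.tensorProduct C '' {pq | deg pq.1 + deg' pq.2 = k}) := by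
  apply le_antisymm
  · refine iSup_le fun i => ?_
    rw [TensorProduct.range_map_eq_span_tmul, Submodule.span_le]
    rintro _ ⟨⟨x, hx⟩, ⟨y, hy⟩, rfl⟩
    rw [hg] at hx
    rw [hg'] at hy
    refine (TensorProduct.mk R M N).apply_mem_of_mem_span₂ ?_ hx hy
    rintro _ ⟨p, rfl, rfl⟩ _ ⟨q, hq, rfl⟩
    exact Submodule.subset_span ⟨(p, q), by simp_all, by simp⟩
  · rw [Submodule.span_le]
    rintro _ ⟨⟨p, q⟩, hpq, rfl⟩
    refine Submodule.mem_iSup_of_mem (deg p)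
      ⟨⟨B p, hg _ ▸ Submodule.subset_span ⟨p, rfl, rfl⟩⟩ ⊗ₜ
        ⟨C q, hg' _ ▸ Submodule.subset_span ⟨q, by simp_all; omega, rfl⟩⟩, by simp⟩

end LinearAlgebra

theorem LinearMap.linearIndependent_of_pairing {K M N P κ : Type*} [Field K] [AddCommGroup M]
    [Module K M] [AddCommGroup N] [Module K N] [AddCommGroup P] [Module K P] [Fintype κ]
    (f : M →ₗ[K] N →ₗ[K] P) {v : κ → M} {w : κ → N}
    (hvw : ∀ p q, p ≠ q → f (v p) (w q) = 0) (hdiag : ∀ p, f (v p) (w p) ≠ 0) :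
    LinearIndependent K v := by
  refine Fintype.linearIndependent_iff.mpr fun g hg q => ?_
  have := f.apply_sum_smul_of_pairing hvw g q
  rw [hg, map_zero, LinearMap.zero_apply, eq_comm, smul_eq_zero] at this
  exact this.resolve_right (hdiag q)

namespace HRData

open Complex

/-- The basis `E 0, …, E m` of a copy of `A_m`, extended by zero beyond `m` so that the
Lefschetz operator acts on it as the shift. -/
structure IsLefschetzString (h : HRData W) (m : ℕ) (E : ℕ → W) : Prop where
  lef_apply : ∀ j, h.lef (E j) = E (j + 1)
  eq_zero : ∀ j, m < j → E j = 0
  mem_grading : ∀ j : ℕ, E j ∈ h.grading (2 * j - m)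
  form_apply : ∀ j j', h.form (E j) (E j') = if j + j' = m then (-I) ^ m else 0

variable {h : HRData W}

theorem form_lef_pow (hSA : ∀ x y, h.form (h.lef x) y = h.form x (h.lef y)) (k : ℕ) (x y : W) :
    h.form ((h.lef ^ k) x) y = h.form x ((h.lef ^ k) y) := by
  induction k generalizing x y with
  | zero => rfl
  | succ k ih =>
    rw [pow_succ', Module.End.mul_apply, hSA, ih, ← Module.End.mul_apply, ← pow_succ, pow_succ']

namespace IsLefschetzString

variable {m : ℕ} {E : ℕ → W}

theorem lef_pow_apply (hE : h.IsLefschetzString m E) (k j : ℕ) :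
    (h.lef ^ k) (E j) = E (j + k) := by
  induction k with
  | zero => rfl
  | succ k ih => rw [pow_succ', Module.End.mul_apply, ih, hE.lef_apply, add_assoc]

theorem linearIndependent (hE : h.IsLefschetzString m E) :
    LinearIndependent ℝ fun j : Fin (m + 1) => E j := by
  refine h.form.linearIndependent_of_pairing (w := fun j : Fin (m + 1) => E (m - j))
    (fun i j hij => ?_) fun j => ?_
  · rw [hE.form_apply, if_neg]
    have := Fin.val_ne_of_ne hij
    omega
  · rw [hE.form_apply, if_pos (by omega)]
    exact pow_ne_zero _ (neg_ne_zero.mpr I_ne_zero)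

theorem isElementarySub (hE : h.IsLefschetzString m E) :
    h.IsElementarySub m (Submodule.span ℝ (Set.range fun j : Fin (m + 1) => E j)) := by
  refine ⟨fun j => E j, hE.linearIndependent, rfl, fun j => hE.mem_grading j, fun j => ?_,
    fun j j' => hE.form_apply j j'⟩
  split_ifs with hj
  · exact hE.lef_apply j
  · exact (hE.lef_apply j).trans (hE.eq_zero _ (by omega))

end IsLefschetzString

theorem isElementarySub_iff {m : ℕ} {U : Submodule ℝ W} :
    h.IsElementarySub m U ↔ ∃ E : ℕ → W, h.IsLefschetzString m E ∧
      U = Submodule.span ℝ (Set.range fun j : Fin (m + 1) => E j) := by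
  refine ⟨fun ⟨e, _, hU, hgr, hlef, hform⟩ => ?_,
    fun ⟨E, hE, hU⟩ => hU ▸ hE.isElementarySub⟩
  let E : ℕ → W := fun j => if hj : j < m + 1 then e ⟨j, hj⟩ else 0
  have hEe : (fun j : Fin (m + 1) => E j) = e := funext fun j => dif_pos j.isLt
  refine ⟨E, ⟨fun j => ?_, fun j hj => dif_neg (by omega), fun j => ?_, fun j j' => ?_⟩,
    hEe ▸ hU⟩
  · by_cases hj : j < m + 1
    · simp only [E, dif_pos hj, hlef]
    · simp only [E, dif_neg hj, dif_neg (show ¬ j + 1 < m + 1 by omega), map_zero]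
  · by_cases hj : j < m + 1
    · simpa only [E, dif_pos hj] using hgr ⟨j, hj⟩
    · simp only [E, dif_neg hj, Submodule.zero_mem]
  · by_cases hj : j < m + 1 <;> by_cases hj' : j' < m + 1
    · simp only [E, dif_pos hj, dif_pos hj', hform]
    all_goals
      simp only [E, dif_neg, hj, hj', map_zero, LinearMap.zero_apply, not_false_eq_true]
      rw [if_neg (by omega)]

theorem isLefschetzString_smul_lef_pow (hSA : ∀ x y, h.form (h.lef x) y = h.form x (h.lef y))
    {m : ℕ} {w : W} {d : ℝ} (hd : 0 < d)
    (hgr : ∀ j : ℕ, (h.lef ^ j) w ∈ h.grading (2 * j - m)) (hzero : (h.lef ^ (m + 1)) w = 0)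
    (hform : ∀ N, h.form w ((h.lef ^ N) w) = if N = m then (d : ℂ) * (-I) ^ m else 0) :
    h.IsLefschetzString m fun j => (√d)⁻¹ • (h.lef ^ j) w := by
  refine ⟨fun j => ?_, fun j hj => ?_, fun j => Submodule.smul_mem _ _ (hgr j), fun j j' => ?_⟩
  · rw [map_smul, pow_succ', Module.End.mul_apply]
  · rw [show j = (j - (m + 1)) + (m + 1) by omega, pow_add, Module.End.mul_apply, hzero,
      map_zero, smul_zero]
  · have hd' : ((√d)⁻¹ * (√d)⁻¹ * d : ℝ) = 1 := by
      rw [← mul_inv, Real.mul_self_sqrt hd.le, inv_mul_cancel₀ hd.ne']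
    simp only [map_smul, LinearMap.smul_apply]
    rw [form_lef_pow hSA, ← Module.End.mul_apply, ← pow_add, hform]
    split_ifs
    · rw [smul_smul, real_smul, ← mul_assoc, ← ofReal_mul, hd', ofReal_one, one_mul]
    · simp

variable {ι : Type*}

structure IsOrthogonalStrings (h : HRData W) (m : ι → ℕ) (E : ι → ℕ → W) : Prop where
  isLefschetzString : ∀ r, h.IsLefschetzString (m r) (E r)
  form_eq_zero : ∀ r r', r ≠ r' → ∀ j j', h.form (E r j) (E r' j') = 0

def stringVectors (m : ι → ℕ) (E : ι → ℕ → W) (p : Σ r, Fin (m r + 1)) : W := E p.1 p.2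

namespace IsOrthogonalStrings

variable {m : ι → ℕ} {E : ι → ℕ → W}

theorem form_apply [DecidableEq ι] (hS : h.IsOrthogonalStrings m E) (r r' : ι) (j j' : ℕ) :
    h.form (E r j) (E r' j') = if r = r' ∧ j + j' = m r then (-I) ^ m r else 0 := by
  by_cases hr : r = r'
  · subst hr
    simp [(hS.isLefschetzString r).form_apply]
  · rw [hS.form_eq_zero r r' hr, if_neg fun h => hr h.1]

theorem form_stringVectors_dual_of_ne (hS : h.IsOrthogonalStrings m E)
    {p q : Σ r, Fin (m r + 1)} (hpq : p ≠ q) :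
    h.form (stringVectors m E p) (E q.1 (m q.1 - q.2)) = 0 := by
  classical
  obtain ⟨r, i⟩ := p
  obtain ⟨r', j⟩ := q
  dsimp only [stringVectors]
  rw [hS.form_apply, if_neg]
  rintro ⟨rfl, hij⟩
  have := i.isLt
  have := j.isLt
  exact hpq (Sigma.mk.inj_iff.mpr ⟨rfl, heq_of_eq (Fin.ext (by omega))⟩)

theorem form_stringVectors_dual_self (hS : h.IsOrthogonalStrings m E) (p : Σ r, Fin (m r + 1)) :
    h.form (stringVectors m E p) (E p.1 (m p.1 - p.2)) = (-I) ^ m p.1 := by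
  rw [stringVectors, (hS.isLefschetzString p.1).form_apply, if_pos (by omega)]

theorem linearIndependent [Fintype ι] (hS : h.IsOrthogonalStrings m E) :
    LinearIndependent ℝ (stringVectors m E) :=
  h.form.linearIndependent_of_pairing (w := fun q => E q.1 (m q.1 - q.2))
    (fun _ _ => hS.form_stringVectors_dual_of_ne) fun p => by
      rw [hS.form_stringVectors_dual_self]
      exact pow_ne_zero _ (neg_ne_zero.mpr I_ne_zero)

theorem form_eq_zero_of_mem_span (hS : h.IsOrthogonalStrings m E) {r r' : ι} (hr : r ≠ r')
    {x y : W} (hx : x ∈ Submodule.span ℝ (Set.range fun j : Fin (m r + 1) => E r j))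
    (hy : y ∈ Submodule.span ℝ (Set.range fun j : Fin (m r' + 1) => E r' j)) :
    h.form x y = 0 :=
  h.form.apply_mem_of_mem_span₂ (p := ⊥) (by
    rintro _ ⟨i, rfl⟩ _ ⟨j, rfl⟩
    exact hS.form_eq_zero r r' hr i j) hx hy

end IsOrthogonalStrings

structure IsLefschetzDecomposition (h : HRData W) (m : ι → ℕ) (E : ι → ℕ → W) : Prop
    extends h.IsOrthogonalStrings m E where
  span_eq_top : Submodule.span ℝ (Set.range (stringVectors m E)) = ⊤

namespace IsLefschetzDecomposition

variable [Fintype ι] {m : ι → ℕ} {E : ι → ℕ → W}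

noncomputable def basis (hD : h.IsLefschetzDecomposition m E) :
    Module.Basis (Σ r, Fin (m r + 1)) ℝ W :=
  .mk hD.linearIndependent hD.span_eq_top.ge

@[simp]
theorem coe_basis (hD : h.IsLefschetzDecomposition m E) : ⇑hD.basis = stringVectors m E :=
  Module.Basis.coe_mk _ _

theorem form_dual (hD : h.IsLefschetzDecomposition m E) (x : W) (q : Σ r, Fin (m r + 1)) :
    h.form x (E q.1 (m q.1 - q.2)) = hD.basis.repr x q • (-I) ^ m q.1 := by
  conv_lhs => rw [← hD.basis.sum_repr x, coe_basis]
  rw [← hD.form_stringVectors_dual_self q]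
  exact h.form.apply_sum_smul_of_pairing (w := fun q => E q.1 (m q.1 - q.2))
    (fun _ _ => hD.form_stringVectors_dual_of_ne) _ q

theorem isInternal_span_range [DecidableEq ι] (hD : h.IsLefschetzDecomposition m E) :
    DirectSum.IsInternal fun r =>
      Submodule.span ℝ (Set.range fun j : Fin (m r + 1) => E r j) := by
  have hfiber : ∀ r,
      hD.basis '' {p | p.1 = r} = Set.range fun j : Fin (m r + 1) => E r j := by
    intro r
    ext x
    simp [stringVectors]
  simpa only [hfiber] using hD.basis.isInternal_span_image_fiber Sigma.fst

theorem grading_eq (hD : h.IsLefschetzDecomposition m E)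
    (hint : DirectSum.IsInternal h.grading) (k : ℤ) :
    h.grading k = Submodule.span ℝ (stringVectors m E '' {p | 2 * (p.2 : ℤ) - m p.1 = k}) := by
  rw [hint.eq_span_image_fiber hD.basis (fun p => 2 * (p.2 : ℤ) - m p.1)
    (fun p => by rw [coe_basis]; exact (hD.isLefschetzString p.1).mem_grading p.2), coe_basis]

theorem grading_eq_bot (hD : h.IsLefschetzDecomposition m E)
    (hint : DirectSum.IsInternal h.grading) {k : ℤ}
    (hk : ((Finset.univ.sup m : ℕ) : ℤ) < |k|) : h.grading k = ⊥ := by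
  rw [hD.grading_eq hint, eq_bot_iff, Submodule.span_le]
  rintro _ ⟨⟨r, j⟩, (hj : 2 * (j : ℤ) - m r = k), rfl⟩
  have := j.isLt
  have : m r ≤ Finset.univ.sup m := Finset.le_sup (Finset.mem_univ r)
  rcases lt_abs.mp hk with hk | hk <;> omega

theorem eq_zero_of_form_eq_zero (hD : h.IsLefschetzDecomposition m E) {x : W}
    (hx : ∀ y, h.form x y = 0) : x = 0 := by
  refine hD.basis.forall_coord_eq_zero_iff.mp fun q => ?_
  have := hD.form_dual x q
  rw [hx, eq_comm, smul_eq_zero] at this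
  exact this.resolve_right (pow_ne_zero _ (neg_ne_zero.mpr I_ne_zero))

theorem form_eq_zero_of_add_ne_zero (hD : h.IsLefschetzDecomposition m E)
    (hint : DirectSum.IsInternal h.grading) {j k : ℤ} (hjk : j + k ≠ 0)
    {x y : W} (hx : x ∈ h.grading j) (hy : y ∈ h.grading k) : h.form x y = 0 := by
  classical
  rw [hD.grading_eq hint] at hx hy
  refine h.form.apply_mem_of_mem_span₂ (p := ⊥) ?_ hx hy
  rintro _ ⟨⟨r, i⟩, (hi : 2 * (i : ℤ) - m r = j), rfl⟩ _
    ⟨⟨r', i'⟩, (hi' : 2 * (i' : ℤ) - m r' = k), rfl⟩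
  rw [Submodule.mem_bot]
  dsimp only [stringVectors]
  rw [hD.form_apply, if_neg]
  rintro ⟨rfl, hii'⟩
  omega

theorem exists_form_eq_I_zpow_mul (hD : h.IsLefschetzDecomposition m E)
    (hint : DirectSum.IsInternal h.grading) {k : ℤ} {x y : W}
    (hx : x ∈ h.grading (-k)) (hy : y ∈ h.grading k) : ∃ r : ℝ, h.form x y = I ^ k * r := by
  classical
  rw [hD.grading_eq hint] at hx hy
  have hmem : h.form x y ∈ Submodule.span ℝ {I ^ k} := by
    refine h.form.apply_mem_of_mem_span₂ ?_ hx hy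
    rintro _ ⟨⟨r, i⟩, -, rfl⟩ _ ⟨⟨r', i'⟩, (hi' : 2 * (i' : ℤ) - m r' = k), rfl⟩
    dsimp only [stringVectors]
    rw [hD.form_apply]
    split_ifs with hrr
    · obtain ⟨rfl, -⟩ := hrr
      rw [neg_I_pow_eq_smul_I_zpow i', hi']
      exact Submodule.smul_mem _ _ (Submodule.mem_span_singleton_self _)
    · exact Submodule.zero_mem _
  obtain ⟨r, hr⟩ := Submodule.mem_span_singleton.mp hmem
  exact ⟨r, by rw [← hr, real_smul, mul_comm]⟩

theorem lef_mem_grading (hD : h.IsLefschetzDecomposition m E)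
    (hint : DirectSum.IsInternal h.grading) {k : ℤ} {x : W}
    (hx : x ∈ h.grading k) : h.lef x ∈ h.grading (k + 2) := by
  rw [hD.grading_eq hint] at hx
  refine (Submodule.span_le (p := (h.grading (k + 2)).comap h.lef)).mpr ?_ hx
  rintro _ ⟨⟨r, j⟩, (hj : 2 * (j : ℤ) - m r = k), rfl⟩
  rw [SetLike.mem_coe, Submodule.mem_comap, stringVectors, (hD.isLefschetzString r).lef_apply]
  convert (hD.isLefschetzString r).mem_grading (j + 1) using 2
  push_cast
  omega

theorem isHRDatum (hD : h.IsLefschetzDecomposition m E)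
    (hint : DirectSum.IsInternal h.grading) (hsymm : ∀ x y, h.form x y = h.form y x)
    (hSA : ∀ x y, h.form (h.lef x) y = h.form x (h.lef y)) : h.IsHRDatum :=
  ⟨Module.Finite.of_basis hD.basis, hint,
    ⟨_, fun _ => hD.grading_eq_bot hint⟩, hsymm, fun _ => hD.eq_zero_of_form_eq_zero,
    fun _ _ hjk _ hx _ hy => hD.form_eq_zero_of_add_ne_zero hint hjk hx hy,
    fun _ _ hx _ hy => hD.exists_form_eq_I_zpow_mul hint hx hy,
    fun _ _ hx => hD.lef_mem_grading hint hx, hSA⟩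

theorem snd_eq_zero_of_repr_ne_zero (hD : h.IsLefschetzDecomposition m E)
    (hint : DirectSum.IsInternal h.grading)
    (hSA : ∀ x y, h.form (h.lef x) y = h.form x (h.lef y)) {k : ℕ} {x : W}
    (hx : x ∈ h.grading (-(k : ℤ))) (hprim : (h.lef ^ (k + 1)) x = 0)
    {p : Σ r, Fin (m r + 1)} (hp : hD.basis.repr x p ≠ 0) :
    (p.2 : ℕ) = 0 ∧ m p.1 = k := by
  obtain ⟨r, j⟩ := p
  have hdeg : 2 * (j : ℤ) - m r = -k := by
    rw [hD.grading_eq hint, ← hD.coe_basis, Module.Basis.mem_span_image] at hx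
    exact hx (Finsupp.mem_support_iff.mpr hp)
  dsimp only
  suffices (j : ℕ) = 0 from ⟨this, by omega⟩
  by_contra hj
  -- the dual partner of `E r j` is `L^(k+1) (E r (j - 1))`, which pairs to zero with `x`
  have hdual : E r (m r - j) = (h.lef ^ (k + 1)) (E r (j - 1)) := by
    rw [(hD.isLefschetzString r).lef_pow_apply]
    congr 1
    omega
  have := hD.form_dual x ⟨r, j⟩
  rw [hdual, ← form_lef_pow hSA, hprim, map_zero, LinearMap.zero_apply, eq_comm,
    smul_eq_zero] at this
  exact hp (this.resolve_right (pow_ne_zero _ (neg_ne_zero.mpr I_ne_zero)))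

theorem exists_pos_of_primitive (hD : h.IsLefschetzDecomposition m E)
    (hint : DirectSum.IsInternal h.grading)
    (hsymm : ∀ x y, h.form x y = h.form y x)
    (hSA : ∀ x y, h.form (h.lef x) y = h.form x (h.lef y)) {k : ℕ} {x : W}
    (hx : x ∈ h.grading (-(k : ℤ))) (hprim : (h.lef ^ (k + 1)) x = 0) (hx0 : x ≠ 0) :
    ∃ r : ℝ, 0 < r ∧ I ^ k * h.form x ((h.lef ^ k) x) = r := by
  set B := hD.basis
  set c := B.repr x
  have hterm : ∀ p, c p • h.form (B p) ((h.lef ^ k) x) = (c p ^ 2) • (-I) ^ k := by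
    rintro ⟨r, j⟩
    by_cases hp : c ⟨r, j⟩ = 0
    · simp [hp]
    obtain ⟨hj, hm⟩ := hD.snd_eq_zero_of_repr_ne_zero hint hSA hx hprim hp
    have := hD.form_dual x ⟨r, j⟩
    dsimp only at hj hm this
    rw [hD.coe_basis, stringVectors, ← form_lef_pow hSA, (hD.isLefschetzString r).lef_pow_apply,
      hsymm]
    dsimp only
    rw [show (j : ℕ) + k = m r - j by omega, this, smul_smul, sq, hm]
  obtain ⟨p, hp⟩ : ∃ p, c p ≠ 0 := by
    by_contra! hc
    exact hx0 (B.repr.map_eq_zero_iff.mp (Finsupp.ext hc))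
  refine ⟨∑ p, c p ^ 2,
    Finset.sum_pos' (fun p _ => sq_nonneg _) ⟨p, Finset.mem_univ _, by positivity⟩, ?_⟩
  have hx_eq : x = ∑ p, c p • B p := (B.sum_repr x).symm
  calc I ^ k * h.form x ((h.lef ^ k) x) = I ^ k * ∑ p, c p • h.form (B p) ((h.lef ^ k) x) := by
        nth_rw 1 [hx_eq]
        simp only [map_sum, LinearMap.sum_apply, map_smul, LinearMap.smul_apply]
    _ = ∑ p, ((c p ^ 2 : ℝ) : ℂ) := by
        simp only [hterm, Finset.mul_sum, real_smul, mul_left_comm (I ^ k), ← mul_pow, mul_neg,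
          I_mul_I, neg_neg, one_pow, mul_one]
    _ = ((∑ p, c p ^ 2 : ℝ) : ℂ) := by push_cast; rfl

theorem isHRModule (hD : h.IsLefschetzDecomposition m E)
    (hint : DirectSum.IsInternal h.grading) (hsymm : ∀ x y, h.form x y = h.form y x)
    (hSA : ∀ x y, h.form (h.lef x) y = h.form x (h.lef y)) : h.IsHRModule :=
  ⟨hD.isHRDatum hint hsymm hSA, fun _ _ hx hprim hx0 =>
    hD.exists_pos_of_primitive hint hsymm hSA hx hprim hx0⟩

end IsLefschetzDecomposition

end HRData

section TensorProduct

open Complex TensorProduct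

variable {Wn W1 : Type*} [AddCommGroup Wn] [Module ℝ Wn] [AddCommGroup W1] [Module ℝ W1]

structure HRData.IsTensorProduct (a : HRData Wn) (b : HRData W1) (t : HRData (Wn ⊗[ℝ] W1)) :
    Prop where
  grading_eq : ∀ k : ℤ, t.grading k = ⨆ i : ℤ, LinearMap.range
    (TensorProduct.map (a.grading i).subtype (b.grading (k - i)).subtype)
  form_tmul : ∀ (x x' : Wn) (y y' : W1),
    t.form (x ⊗ₜ y) (x' ⊗ₜ y') = a.form x x' * b.form y y'
  lef_tmul : ∀ (x : Wn) (y : W1), t.lef (x ⊗ₜ y) = a.lef x ⊗ₜ y + x ⊗ₜ b.lef y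

def tmulPair (E : ℕ → Wn) (F : ℕ → W1) (j : ℕ) (β : ℝ) : Wn ⊗[ℝ] W1 :=
  E (j + 1) ⊗ₜ F 0 + β • E j ⊗ₜ F 1

noncomputable def clebschGordan (t : HRData (Wn ⊗[ℝ] W1)) (n : ℕ) (E : ℕ → Wn)
    (F : ℕ → W1) : Fin 2 → ℕ → Wn ⊗[ℝ] W1 :=
  ![fun j => (√((n : ℝ) + 1))⁻¹ • (t.lef ^ j) (E 0 ⊗ₜ F 0),
    fun j => (√((n : ℝ) + 1))⁻¹ • (t.lef ^ j) (tmulPair E F 0 (-n))]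

namespace HRData.IsTensorProduct

variable {a : HRData Wn} {b : HRData W1} {t : HRData (Wn ⊗[ℝ] W1)}

theorem tmul_mem_grading (ht : IsTensorProduct a b t) {i j : ℤ} {x : Wn} {y : W1}
    (hx : x ∈ a.grading i) (hy : y ∈ b.grading j) : x ⊗ₜ y ∈ t.grading (i + j) := by
  rw [ht.grading_eq]
  exact Submodule.mem_iSup_of_mem i ⟨⟨x, hx⟩ ⊗ₜ ⟨y, by simpa using hy⟩, rfl⟩

theorem form_comm (ht : IsTensorProduct a b t) (ha : ∀ x y, a.form x y = a.form y x)
    (hb : ∀ x y, b.form x y = b.form y x) (z z' : Wn ⊗[ℝ] W1) :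
    t.form z z' = t.form z' z := by
  have : t.form = t.form.flip := TensorProduct.ext' fun x y => TensorProduct.ext' fun x' y' => by
    rw [LinearMap.flip_apply, ht.form_tmul, ht.form_tmul, ha, hb]
  exact LinearMap.congr_fun₂ this z z'

theorem form_lef (ht : IsTensorProduct a b t)
    (ha : ∀ x y, a.form (a.lef x) y = a.form x (a.lef y))
    (hb : ∀ x y, b.form (b.lef x) y = b.form x (b.lef y)) (z z' : Wn ⊗[ℝ] W1) :
    t.form (t.lef z) z' = t.form z (t.lef z') := by
  have : t.form ∘ₗ t.lef = t.form.compl₂ t.lef :=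
    TensorProduct.ext' fun x y => TensorProduct.ext' fun x' y' => by
      simp only [LinearMap.comp_apply, LinearMap.compl₂_apply, ht.lef_tmul, map_add,
        LinearMap.add_apply, ht.form_tmul, ha, hb]
  exact LinearMap.congr_fun₂ this z z'

theorem isInternal_grading {ι κ : Type*} (ht : IsTensorProduct a b t)
    (ha : DirectSum.IsInternal a.grading) (hb : DirectSum.IsInternal b.grading)
    (B : Module.Basis ι ℝ Wn) (C : Module.Basis κ ℝ W1) (deg : ι → ℤ) (deg' : κ → ℤ)
    (hB : ∀ p, B p ∈ a.grading (deg p)) (hC : ∀ q, C q ∈ b.grading (deg' q)) :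
    DirectSum.IsInternal t.grading := by
  have hgr : t.grading =
      fun k => Submodule.span ℝ (B.tensorProduct C '' {pq | deg pq.1 + deg' pq.2 = k}) :=
    funext fun k => by
      rw [ht.grading_eq, B.iSup_range_map_eq_span_image_fiber C deg deg'
        (ha.eq_span_image_fiber B deg hB) (hb.eq_span_image_fiber C deg' hC)]
  rw [hgr]
  exact (B.tensorProduct C).isInternal_span_image_fiber _

variable {n : ℕ} {E : ℕ → Wn} {F : ℕ → W1}

theorem lef_tmul_zero (ht : IsTensorProduct a b t) (hE : a.IsLefschetzString n E)
    (hF : b.IsLefschetzString 1 F) : t.lef (E 0 ⊗ₜ F 0) = tmulPair E F 0 1 := by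
  rw [ht.lef_tmul, hE.lef_apply, hF.lef_apply, tmulPair, one_smul]

theorem lef_pow_tmulPair (ht : IsTensorProduct a b t) (hE : a.IsLefschetzString n E)
    (hF : b.IsLefschetzString 1 F) (N j : ℕ) (β : ℝ) :
    (t.lef ^ N) (tmulPair E F j β) = tmulPair E F (j + N) (β + N) := by
  induction N with
  | zero => simp
  | succ N ih =>
    rw [pow_succ', Module.End.mul_apply, ih, tmulPair, map_add, map_smul, ht.lef_tmul,
      ht.lef_tmul, hE.lef_apply, hE.lef_apply, hF.lef_apply, hF.lef_apply,
      hF.eq_zero 2 (by norm_num), tmul_zero, add_zero, tmulPair]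
    push_cast
    module

theorem form_tmul_zero_tmulPair (ht : IsTensorProduct a b t) (hE : a.IsLefschetzString n E)
    (hF : b.IsLefschetzString 1 F) (N : ℕ) (β : ℝ) :
    t.form (E 0 ⊗ₜ F 0) (tmulPair E F N β) = if N = n then β * (-I) ^ (n + 1) else 0 := by
  simp only [tmulPair, map_add, map_smul, ht.form_tmul, hE.form_apply, hF.form_apply]
  split_ifs <;> first | omega | simp [pow_succ]

theorem form_tmulPair (ht : IsTensorProduct a b t) (hE : a.IsLefschetzString n E)
    (hF : b.IsLefschetzString 1 F) (j j' : ℕ) (α β : ℝ) :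
    t.form (tmulPair E F j α) (tmulPair E F j' β) =
      if j + j' + 1 = n then (α + β) * (-I) ^ (n + 1) else 0 := by
  simp only [tmulPair, map_add, map_smul, LinearMap.add_apply, LinearMap.smul_apply, ht.form_tmul,
    hE.form_apply, hF.form_apply]
  split_ifs <;> first | omega | (simp [pow_succ, real_smul] <;> ring)

theorem tmulPair_mem_grading (ht : IsTensorProduct a b t) (hE : a.IsLefschetzString n E)
    (hF : b.IsLefschetzString 1 F) (j : ℕ) (β : ℝ) :
    tmulPair E F j β ∈ t.grading (2 * j + 1 - n) := by
  refine Submodule.add_mem _ ?_ (Submodule.smul_mem _ _ ?_)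
  · convert ht.tmul_mem_grading (hE.mem_grading (j + 1)) (hF.mem_grading 0) using 2
    push_cast
    ring
  · convert ht.tmul_mem_grading (hE.mem_grading j) (hF.mem_grading 1) using 2
    push_cast
    ring

theorem isLefschetzString_clebschGordan_zero (ht : IsTensorProduct a b t)
    (hE : a.IsLefschetzString n E) (hF : b.IsLefschetzString 1 F)
    (hSA : ∀ x y, t.form (t.lef x) y = t.form x (t.lef y)) :
    t.IsLefschetzString (n + 1) (clebschGordan t n E F 0) := by
  have hpow (N : ℕ) : (t.lef ^ (N + 1)) (E 0 ⊗ₜ F 0) = tmulPair E F N (N + 1) := by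
    rw [pow_succ, Module.End.mul_apply, ht.lef_tmul_zero hE hF, ht.lef_pow_tmulPair hE hF,
      zero_add, add_comm]
  refine isLefschetzString_smul_lef_pow hSA (by positivity) (fun j => ?_) ?_ fun N => ?_
  · cases j with
    | zero =>
      rw [pow_zero, Module.End.one_apply]
      convert ht.tmul_mem_grading (hE.mem_grading 0) (hF.mem_grading 0) using 2
      push_cast
      ring
    | succ j =>
      rw [hpow]
      convert ht.tmulPair_mem_grading hE hF j _ using 2
      push_cast
      ring
  · rw [hpow, tmulPair, hE.eq_zero _ (by omega), hE.eq_zero _ (by omega), zero_tmul, zero_tmul,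
      smul_zero, add_zero]
  · cases N with
    | zero => simp [ht.form_tmul, hF.form_apply]
    | succ N =>
      rw [hpow, ht.form_tmul_zero_tmulPair hE hF]
      split_ifs <;> first | omega | (subst_vars; push_cast; ring)

theorem isLefschetzString_clebschGordan_one (ht : IsTensorProduct a b t)
    (hE : a.IsLefschetzString n E) (hF : b.IsLefschetzString 1 F)
    (hSA : ∀ x y, t.form (t.lef x) y = t.form x (t.lef y)) (hn : 1 ≤ n) :
    t.IsLefschetzString (n - 1) (clebschGordan t n E F 1) := by
  refine isLefschetzString_smul_lef_pow hSA (by positivity) (fun j => ?_) ?_ fun N => ?_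
  · rw [ht.lef_pow_tmulPair hE hF]
    convert ht.tmulPair_mem_grading hE hF _ _ using 2
    push_cast [hn]
    ring
  · rw [Nat.sub_add_cancel hn, ht.lef_pow_tmulPair hE hF, zero_add, tmulPair,
      hE.eq_zero _ (by omega), neg_add_cancel, zero_smul, zero_tmul, add_zero]
  · rw [ht.lef_pow_tmulPair hE hF, ht.form_tmulPair hE hF]
    split_ifs with h1 h2 h2
    · obtain ⟨k, rfl⟩ : ∃ k, n = k + 1 := ⟨n - 1, by omega⟩
      obtain rfl : N = k := by omega
      rw [Nat.add_sub_cancel, pow_succ, pow_succ, mul_assoc, neg_mul_neg, I_mul_I]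
      push_cast
      ring
    · omega
    · omega
    · rfl

theorem isOrthogonalStrings_clebschGordan (ht : IsTensorProduct a b t)
    (hE : a.IsLefschetzString n E) (hF : b.IsLefschetzString 1 F)
    (hsymm : ∀ x y, t.form x y = t.form y x)
    (hSA : ∀ x y, t.form (t.lef x) y = t.form x (t.lef y)) (hn : 1 ≤ n) :
    t.IsOrthogonalStrings ![n + 1, n - 1] (clebschGordan t n E F) := by
  have horth : ∀ j j', t.form (clebschGordan t n E F 0 j) (clebschGordan t n E F 1 j') = 0 := by
    intro j j'
    simp only [clebschGordan, Matrix.cons_val_zero, Matrix.cons_val_one, map_smul,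
      LinearMap.smul_apply, form_lef_pow hSA, ht.lef_pow_tmulPair hE hF,
      ht.form_tmul_zero_tmulPair hE hF]
    split_ifs with h
    · obtain rfl : n = j + j' := by omega
      push_cast
      simp
    · simp
  refine ⟨Fin.forall_fin_two.mpr ⟨ht.isLefschetzString_clebschGordan_zero hE hF hSA,
    ht.isLefschetzString_clebschGordan_one hE hF hSA hn⟩, fun r r' hrr' j j' => ?_⟩
  fin_cases r <;> fin_cases r'
  · exact absurd rfl hrr'
  · exact horth j j'
  · exact (hsymm _ _).trans (horth j' j)
  · exact absurd rfl hrr'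

end HRData.IsTensorProduct

end TensorProduct

/-- For every `n ≥ 1` there is an isomorphism of HR-data
`A_n ⊗ A_1 ≅ A_{n+1} ⊕ A_{n−1}`; in particular `A_n ⊗ A_1` is an HR-module.  Here `a` is
a copy of `A_n`, `b` a copy of `A_1`, and `t` is their tensor product HR-data
(characterized by the stated equations); the isomorphism is realized by an internal
orthogonal decomposition of the tensor product into elementary submodules of types
`n + 1` and `n − 1`. -/
theorem elementary_tensor_A1 {Wn W1 : Type*}
    [AddCommGroup Wn] [Module ℝ Wn] [AddCommGroup W1] [Module ℝ W1]
    (n : ℕ) (hn : 1 ≤ n)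
    (a : HRData Wn) (b : HRData W1)
    (ha : a.IsElementary n) (hb : b.IsElementary 1)
    (t : HRData (Wn ⊗[ℝ] W1))
    (htg : ∀ k : ℤ, t.grading k = ⨆ i : ℤ, LinearMap.range
      (TensorProduct.map (a.grading i).subtype (b.grading (k - i)).subtype))
    (htf : ∀ (x x' : Wn) (y y' : W1),
      t.form (x ⊗ₜ y) (x' ⊗ₜ y') = a.form x x' * b.form y y')
    (htl : ∀ (x : Wn) (y : W1),
      t.lef (x ⊗ₜ y) = a.lef x ⊗ₜ y + x ⊗ₜ b.lef y) :
    t.IsHRModule ∧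
    ∃ U U' : Submodule ℝ (Wn ⊗[ℝ] W1),
      IsCompl U U' ∧
      t.IsElementarySub (n + 1) U ∧
      t.IsElementarySub (n - 1) U' ∧
      (∀ x ∈ U, ∀ y ∈ U', t.form x y = 0) := by
  obtain ⟨⟨-, haInt, -, haSymm, -, -, -, -, haSA⟩, haE⟩ := ha
  obtain ⟨⟨-, hbInt, -, hbSymm, -, -, -, -, hbSA⟩, hbE⟩ := hb
  obtain ⟨E, hE, hEtop⟩ := a.isElementarySub_iff.mp haE
  obtain ⟨F, hF, hFtop⟩ := b.isElementarySub_iff.mp hbE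
  have ht : a.IsTensorProduct b t := ⟨htg, htf, htl⟩
  let Ba := Module.Basis.mk hE.linearIndependent hEtop.le
  let Bb := Module.Basis.mk hF.linearIndependent hFtop.le
  have hint := ht.isInternal_grading haInt hbInt Ba Bb _ _
    (fun j => by simpa [Ba] using hE.mem_grading j) (fun s => by simpa [Bb] using hF.mem_grading s)
  have hsymm := ht.form_comm haSymm hbSymm
  have hSA := ht.form_lef haSA hbSA
  have hS := ht.isOrthogonalStrings_clebschGordan hE hF hsymm hSA hn
  have hspan : Submodule.span ℝ
      (Set.range (HRData.stringVectors ![n + 1, n - 1] (clebschGordan t n E F))) = ⊤ := by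
    have := Module.Finite.of_basis Ba
    have := Module.Finite.of_basis Bb
    refine hS.linearIndependent.span_eq_top_of_card_eq_finrank' ?_
    rw [Module.finrank_tensorProduct, Module.finrank_eq_card_basis Ba,
      Module.finrank_eq_card_basis Bb]
    simp [Fintype.card_sigma, Fin.sum_univ_two]
    omega
  have hD : t.IsLefschetzDecomposition _ _ := ⟨hS, hspan⟩
  refine ⟨hD.isHRModule hint hsymm hSA, _, _,
    hD.isInternal_span_range.isCompl zero_ne_one (by ext r; fin_cases r <;> simp),
    (hS.isLefschetzString 0).isElementarySub, (hS.isLefschetzString 1).isElementarySub,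
    fun x hx y hy => hS.form_eq_zero_of_mem_span zero_ne_one hx hy⟩
end
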